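/- Let $U_1: \mathbb{R} \to \mathbb{R}$ be increasing and $U_2: \mathbb{R} \to \mathbb{R}$ be decreasing, both continuously differentiable, with $U = U_1 + U_2$ and $\int_{\mathbb{R}} e^{-U(x)}\,dx < \infty$. Define the kernel density $K(x,y) = \mathbb{1}_{\{y>x\}} U_1'(2y-x)e^{-U_1(2y-x)+U_1(x)} + \mathbb{1}_{\{y<x\}}(-U_2'(2y-x))e^{-U_2(2y-x)+U_2(x)}$. Then $\pi(x) \propto e^{-U(x)}$ satisfies $\pi(y) = \int_{-\infty}^{\infty} K(x,y)\pi(x)\,dx$ for all $y$ (assuming the differentiation under the integral sign is valid and boundary terms vanish at $\pm\infty$). -/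

import Mathlib

/-!
Fix `y` and let `g u = exp (-U₁ (2y - u) - U₂ u)`. Folding the real line at `y` by `x ↦ 2y - x`,
the two branches of the kernel combine on `u < y` into `(U₁' (2y - u) - U₂' u) g u = g' u`, so
`∫ K(x, y) π(x) dx = g y - lim_{u → -∞} g u = π(y)`. The limit is `0` because `g` is monotone,
positive, and bounded on `(-∞, y]` by the integrable `π`.
-/

open MeasureTheory Filter Set Topology

theorem Monotone.tendsto_atBot_zero_of_integrableOn_Iic {g : ℝ → ℝ} (hg : Monotone g)
    (hg₀ : ∀ x, 0 ≤ g x) {a : ℝ} (hint : IntegrableOn g (Iic a)) :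
    Tendsto g atBot (𝓝 0) := by
  have hbdd : BddBelow (range g) := ⟨0, forall_mem_range.2 hg₀⟩
  have hlim := tendsto_atBot_ciInf hg hbdd
  suffices ⨅ x, g x = 0 by rwa [this] at hlim
  refine le_antisymm (not_lt.1 fun hpos => ?_) (le_ciInf hg₀)
  have hfin := hint.measure_ge_lt_top hpos
  have hall : {x | ⨅ t, g t ≤ g x} = univ := eq_univ_of_forall fun x => ciInf_le hbdd x
  rw [Measure.restrict_apply' measurableSet_Iic, hall, univ_inter, Real.volume_Iic] at hfin
  exact lt_irrefl _ hfin

section Reflection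

variable {E : Type*} [NormedAddCommGroup E] [NormedSpace ℝ E]

theorem setIntegral_Iio_comp_sub_left (f : ℝ → E) (y : ℝ) :
    ∫ u in Iio y, f (2 * y - u) = ∫ x in Ioi y, f x := by
  have hpre : (fun u : ℝ => 2 * y - u) ⁻¹' Ioi y = Iio y := by
    ext u
    simp only [mem_preimage, mem_Ioi, mem_Iio]
    constructor <;> intro h <;> linarith
  rw [← hpre]
  exact (Measure.measurePreserving_sub_left volume (2 * y)).setIntegral_preimage_emb
    (MeasurableEquiv.subLeft (2 * y)).measurableEmbedding f (Ioi y)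

theorem integral_eq_setIntegral_Iio_add_comp_sub_left {f : ℝ → E} (hf : Integrable f) (y : ℝ) :
    ∫ x, f x = ∫ u in Iio y, (f u + f (2 * y - u)) := by
  rw [integral_add hf.integrableOn (hf.comp_sub_left (2 * y)).integrableOn,
    setIntegral_Iio_comp_sub_left, ← integral_Ici_eq_integral_Ioi,
    intervalIntegral.integral_Iio_add_Ici hf.integrableOn hf.integrableOn]

end Reflection

noncomputable def samplerKernel (U₁ U₂ : ℝ → ℝ) (x y : ℝ) : ℝ :=
  (if x < y then deriv U₁ (2 * y - x) * Real.exp (-U₁ (2 * y - x) + U₁ x) else 0)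
    + (if y < x then -deriv U₂ (2 * y - x) * Real.exp (-U₂ (2 * y - x) + U₂ x) else 0)

noncomputable def reflectedWeight (U₁ U₂ : ℝ → ℝ) (y u : ℝ) : ℝ :=
  Real.exp (-U₁ (2 * y - u) - U₂ u)

section Sampler

variable {U₁ U₂ : ℝ → ℝ}

theorem reflectedWeight_self (y : ℝ) :
    reflectedWeight U₁ U₂ y y = Real.exp (-(U₁ y + U₂ y)) := by
  rw [reflectedWeight, two_mul, add_sub_cancel_right, neg_add']

theorem reflectedWeight_le (hU₁ : Monotone U₁) {y u : ℝ} (hu : u ≤ y) :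
    reflectedWeight U₁ U₂ y u ≤ Real.exp (-(U₁ u + U₂ u)) := by
  have : U₁ u ≤ U₁ (2 * y - u) := hU₁ (by linarith)
  exact Real.exp_le_exp.2 (by linarith)

theorem monotone_reflectedWeight (hU₁ : Monotone U₁) (hU₂ : Antitone U₂) (y : ℝ) :
    Monotone (reflectedWeight U₁ U₂ y) := fun u v huv => by
  have h₁ : U₁ (2 * y - v) ≤ U₁ (2 * y - u) := hU₁ (by linarith)
  have h₂ : U₂ v ≤ U₂ u := hU₂ huv
  exact Real.exp_le_exp.2 (by linarith)

theorem hasDerivAt_reflectedWeight (hU₁ : Differentiable ℝ U₁) (hU₂ : Differentiable ℝ U₂)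
    (y u : ℝ) :
    HasDerivAt (reflectedWeight U₁ U₂ y)
      ((deriv U₁ (2 * y - u) - deriv U₂ u) * reflectedWeight U₁ U₂ y u) u := by
  have hrefl : HasDerivAt (fun x : ℝ => 2 * y - x) (-1) u := (hasDerivAt_id u).const_sub (2 * y)
  have hexponent : HasDerivAt (fun x => -U₁ (2 * y - x) - U₂ x)
      (deriv U₁ (2 * y - u) - deriv U₂ u) u := by
    exact (((hU₁ _).hasDerivAt.comp u hrefl).neg.sub (hU₂ u).hasDerivAt).congr_deriv (by ring)
  exact hexponent.exp.congr_deriv (mul_comm _ _)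

theorem tendsto_reflectedWeight_atBot (hU₁ : Monotone U₁) (hU₂ : Antitone U₂)
    (hint : Integrable (fun x => Real.exp (-(U₁ x + U₂ x)))) (y : ℝ) :
    Tendsto (reflectedWeight U₁ U₂ y) atBot (𝓝 0) := by
  have hmono := monotone_reflectedWeight hU₁ hU₂ y
  refine hmono.tendsto_atBot_zero_of_integrableOn_Iic (fun _ => (Real.exp_pos _).le)
    (a := y) (hint.integrableOn.mono' hmono.measurable.aestronglyMeasurable ?_)
  refine ae_restrict_of_forall_mem measurableSet_Iic fun u hu => ?_
  exact (Real.norm_of_nonneg (Real.exp_pos _).le).trans_le (reflectedWeight_le hU₁ hu)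

theorem samplerKernel_fold {y u : ℝ} (hu : u < y) :
    samplerKernel U₁ U₂ u y * Real.exp (-(U₁ u + U₂ u))
      + samplerKernel U₁ U₂ (2 * y - u) y * Real.exp (-(U₁ (2 * y - u) + U₂ (2 * y - u)))
      = (deriv U₁ (2 * y - u) - deriv U₂ u) * reflectedWeight U₁ U₂ y u := by
  have hreflect : y < 2 * y - u := by linarith
  simp only [samplerKernel, reflectedWeight, if_pos hu, if_neg hu.not_gt, if_pos hreflect,
    if_neg hreflect.not_gt, add_zero, zero_add, sub_sub_cancel, mul_assoc, ← Real.exp_add]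
  ring_nf

end Sampler

theorem decomposition_sampler_stationarity_general
    (U₁ U₂ : ℝ → ℝ) (hU₁mono : Monotone U₁) (hU₂anti : Antitone U₂)
    (hU₁ : ContDiff ℝ 1 U₁) (hU₂ : ContDiff ℝ 1 U₂)
    (hint : Integrable (fun x => Real.exp (-(U₁ x + U₂ x))))
    (K : ℝ → ℝ → ℝ)
    (hK : ∀ x y, K x y =
      (if x < y then deriv U₁ (2 * y - x) * Real.exp (-U₁ (2 * y - x) + U₁ x) else 0)
      + (if y < x then -deriv U₂ (2 * y - x) * Real.exp (-U₂ (2 * y - x) + U₂ x) else 0))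
    (hKint : ∀ y, Integrable (fun x => K x y * Real.exp (-(U₁ x + U₂ x)))) :
    ∀ y : ℝ, Real.exp (-(U₁ y + U₂ y)) = ∫ x : ℝ, K x y * Real.exp (-(U₁ x + U₂ x)) := by
  intro y
  obtain rfl : K = samplerKernel U₁ U₂ := funext₂ hK
  have hfold : EqOn
      (fun u => samplerKernel U₁ U₂ u y * Real.exp (-(U₁ u + U₂ u))
        + samplerKernel U₁ U₂ (2 * y - u) y * Real.exp (-(U₁ (2 * y - u) + U₂ (2 * y - u))))
      (fun u => (deriv U₁ (2 * y - u) - deriv U₂ u) * reflectedWeight U₁ U₂ y u) (Iio y) :=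
    fun _ hu => samplerKernel_fold hu
  have hderiv_int : IntegrableOn
      (fun u => (deriv U₁ (2 * y - u) - deriv U₂ u) * reflectedWeight U₁ U₂ y u) (Iic y) := by
    rw [integrableOn_Iic_iff_integrableOn_Iio]
    exact ((hKint y).add ((hKint y).comp_sub_left (2 * y))).integrableOn.congr_fun hfold
      measurableSet_Iio
  rw [integral_eq_setIntegral_Iio_add_comp_sub_left (hKint y),
    setIntegral_congr_fun measurableSet_Iio hfold, ← integral_Iic_eq_integral_Iio,
    integral_Iic_of_hasDerivAt_of_tendsto'
      (fun u _ => hasDerivAt_reflectedWeight (hU₁.differentiable one_ne_zero)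
        (hU₂.differentiable one_ne_zero) y u)
      hderiv_int (tendsto_reflectedWeight_atBot hU₁mono hU₂anti hint y),
    sub_zero, reflectedWeight_self]

/-- Theorem 4.1: stationarity of the target density for the decomposition-based sampler. -/
theorem decomposition_sampler_stationarity
    (U₁ U₂ : ℝ → ℝ) (hU₁mono : Monotone U₁) (hU₂anti : Antitone U₂)
    (hU₁ : ContDiff ℝ 1 U₁) (hU₂ : ContDiff ℝ 1 U₂)
    (hint : Integrable (fun x => Real.exp (-(U₁ x + U₂ x))))
    (K : ℝ → ℝ → ℝ)
    (hK : ∀ x y, K x y =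
      (if x < y then deriv U₁ (2 * y - x) * Real.exp (-U₁ (2 * y - x) + U₁ x) else 0)
      + (if y < x then -deriv U₂ (2 * y - x) * Real.exp (-U₂ (2 * y - x) + U₂ x) else 0))
    (hKint : ∀ y, Integrable (fun x => K x y * Real.exp (-(U₁ x + U₂ x))))
    (hbdry : ∀ y : ℝ,
      Tendsto (fun u => Real.exp (-U₁ (2 * y - u) - U₂ u) *
        (deriv U₁ (2 * y - u) + deriv U₂ u)) atBot (nhds 0)) :
    ∀ y : ℝ, Real.exp (-(U₁ y + U₂ y)) = ∫ x : ℝ, K x y * Real.exp (-(U₁ x + U₂ x)) :=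
  decomposition_sampler_stationarity_general U₁ U₂ hU₁mono hU₂anti hU₁ hU₂ hint K hK hKint
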